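/- Let G be an undirected graph and k, ℓ, r ∈ ℕ with ℓ ≤ k−1 and r ≤ k−1. Let conf = (v_1,…,v_k), conf' = (v_1',…,v_k'), conf'' = (v_1'',…,v_k'') be (G,k)-configurations such that (conf, conf') is an ℓ-transition and (conf', conf'') is an r-transition. Let W be the triplet order of (conf, conf', conf'') and let f : V(G) → {1,…,3k−2} be a function that is injective on W and satisfies f(v_a') = 2k − a for every 1 ≤ a ≤ k. If there exists a (G,k)-configuration conf* = (w_1,…,w_k) with w_1 = v_1' and w_k = v_k' such that (1) f(w_a) = 2k − a for every 1 ≤ a ≤ k, (2) w_a = v_{a−ℓ} for every ℓ+1 ≤ a ≤ k, and (3) v_a'' = w_{a−r} for every r+1 ≤ a ≤ k, then (conf, conf*) is an ℓ-transition and (conf*, conf'') is an r-transition. -/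

import Mathlib

variable {V : Type*}

/-- A `(G,k)`-configuration: a tuple of `k` pairwise-distinct vertices of `G` in which
consecutive vertices are adjacent (0-indexed rendering of `(v_1, …, v_k)`). -/
def IsConfig (G : SimpleGraph V) (k : ℕ) (c : Fin k → V) : Prop :=
  Function.Injective c ∧
    ∀ (i : ℕ) (h : i + 1 < k), G.Adj (c ⟨i, by omega⟩) (c ⟨i + 1, h⟩)

/-- A 1-transition between two `k`-tuples: the new head `v_1'` differs from
`v_1, …, v_{k-1}`, and `v_i' = v_{i-1}` for `2 ≤ i ≤ k`. -/
def OneTrans (k : ℕ) (c c' : Fin k → V) : Prop :=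
  (∀ (i : ℕ) (h : i + 1 < k), c' ⟨0, by omega⟩ ≠ c ⟨i, by omega⟩) ∧
    ∀ (i : ℕ) (h : i + 1 < k), c' ⟨i + 1, h⟩ = c ⟨i, by omega⟩

/-- An `ℓ`-transition: a sequence of `ℓ+1` `(G,k)`-configurations starting at `c`,
ending at `c'`, in which every consecutive pair is a 1-transition. -/
def IsTransition (G : SimpleGraph V) (k ℓ : ℕ) (c c' : Fin k → V) : Prop :=
  ∃ seq : Fin (ℓ + 1) → Fin k → V,
    seq 0 = c ∧ seq (Fin.last ℓ) = c' ∧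
      (∀ i, IsConfig G k (seq i)) ∧
      ∀ (i : ℕ) (h : i + 1 < ℓ + 1), OneTrans k (seq ⟨i, by omega⟩) (seq ⟨i + 1, h⟩)

/-- `c` can reach `c'` if `(c, c')` is an `ℓ`-transition for some `ℓ`. -/
def Reach (G : SimpleGraph V) (k : ℕ) (c c' : Fin k → V) : Prop :=
  ∃ ℓ : ℕ, IsTransition G k ℓ c c'

/-- The triplet order of `(conf, conf', conf'')`: starting from the ordered list
`(v_k, …, v_1, v_k', …, v_1', v_k'', …, v_1'')`, first remove the vertices of `conf`
and of `conf''` that occur in `conf'`, then remove the vertices of `conf` that occur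
in `conf''`. -/
def tripletOrder [DecidableEq V] {k : ℕ} (c c' c'' : Fin k → V) : List V :=
  ((List.ofFn c).reverse.filter fun x =>
      decide (x ∉ List.ofFn c' ∧ x ∉ List.ofFn c'')) ++
    (List.ofFn c').reverse ++
    ((List.ofFn c'').reverse.filter fun x => decide (x ∉ List.ofFn c'))

lemma fcg {W : Sort*} {k : ℕ} (g : Fin k → W) {x y : ℕ} (hx : x < k) (hy : y < k)
    (h : x = y) : g ⟨x, hx⟩ = g ⟨y, hy⟩ := by subst h; rfl

lemma trans_head_ne {G : SimpleGraph V} {k m : ℕ} {c c' : Fin k → V}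
    (h : IsTransition G k m c c') (hmk : m < k) (j t : ℕ) (hj : j < m) (htk : t < k)
    (ht : t + m < k + j) : c' ⟨j, by omega⟩ ≠ c ⟨t, htk⟩ := by
  obtain ⟨s, h0, hl, _, hstep⟩ := h
  have key : ∀ (i : ℕ) (hi : i < m+1) (a : ℕ) (ha : a < k) (hia : i ≤ a),
      s ⟨i, hi⟩ ⟨a, ha⟩ = c ⟨a - i, by omega⟩ := by
    intro i
    induction i with
    | zero =>
      intro hi a ha _
      have e : (⟨0, hi⟩ : Fin (m+1)) = 0 := Fin.ext (by simp)
      rw [e, h0]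
      exact fcg c ha (by omega) (by omega)
    | succ i ih =>
      intro hi a ha hia
      have h1 := (hstep i hi).2 (a-1) (by omega)
      have h2 : s ⟨i+1, hi⟩ ⟨a, ha⟩ = s ⟨i, by omega⟩ ⟨a-1, by omega⟩ := by
        rw [fcg (s ⟨i+1, hi⟩) ha (by omega) (show a = a-1+1 by omega)]; exact h1
      rw [h2, ih (by omega) (a-1) (by omega) (by omega)]
      exact fcg c (by omega) (by omega) (by omega)
  have key2 : ∀ (d i : ℕ) (hdi : i + d < m + 1),
      s ⟨i + d, hdi⟩ ⟨d, by omega⟩ = s ⟨i, by omega⟩ ⟨0, by omega⟩ := by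
    intro d
    induction d with
    | zero => intro i hdi; rfl
    | succ d ih =>
      intro i hdi
      have h1 := (hstep (i+d) (by omega)).2 d (by omega)
      exact h1.trans (ih i (by omega))
  intro heq
  have e1 : c' ⟨j, by omega⟩ = s ⟨m - j, by omega⟩ ⟨0, by omega⟩ := by
    rw [← hl]
    rw [show Fin.last m = (⟨m - j + j, by omega⟩ : Fin (m+1)) from Fin.ext (by simp; omega)]
    exact key2 j (m - j) (by omega)
  have e2 := (hstep (m - j - 1) (by omega)).1 (t + (m - j - 1)) (by omega)
  apply e2
  have e3 : s ⟨m-j-1+1, by omega⟩ = s ⟨m-j, by omega⟩ := congrArg s (Fin.ext (show m-j-1+1 = m-j by omega))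
  rw [e3, ← e1, key (m-j-1) (by omega) (t+(m-j-1)) (by omega) (by omega), heq]
  exact fcg c _ _ (by omega)

lemma transition_of {G : SimpleGraph V} {k m : ℕ} (hmk : m < k) {c cs : Fin k → V}
    (hc : IsConfig G k c) (hcs : IsConfig G k cs)
    (hshift : ∀ (a : ℕ) (ha : a < k) (hma : m ≤ a), cs ⟨a, ha⟩ = c ⟨a - m, by omega⟩)
    (haux : ∀ (j t : ℕ) (hj : j < m) (htk : t < k) (ht : t + m < k + j),
      cs ⟨j, by omega⟩ ≠ c ⟨t, htk⟩) :
    IsTransition G k m c cs := by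
  refine ⟨fun i a => if h : (a : ℕ) < (i : ℕ) then
      cs ⟨m - i + a, by have := i.isLt; omega⟩
    else c ⟨(a : ℕ) - i, by have := a.isLt; omega⟩, ?_, ?_, ?_, ?_⟩
  · funext a
    simp only [Fin.val_zero, Nat.not_lt_zero, dif_neg, not_false_iff]
    refine (dif_neg (Nat.not_lt_zero _)).trans ?_
    rw [fcg c (by have := a.isLt; omega) a.isLt (by omega)]
  · funext a
    simp only [Fin.val_last]
    by_cases h : (a : ℕ) < m
    · rw [dif_pos h]
      rw [fcg cs (by omega) a.isLt (by omega)]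
    · rw [dif_neg h]
      rw [← hshift a a.isLt (by omega)]
  · intro i
    have hi := i.isLt
    constructor
    · intro a b hab
      simp only at hab
      split_ifs at hab with h1 h2 h3
      · have h3 := hcs.1 hab
        simp only [Fin.mk.injEq] at h3
        exact Fin.ext (by omega)
      · exact absurd hab (haux (m - i + a) (b - i) (by omega) (by omega)
          (by have := b.isLt; omega))
      · exact absurd hab.symm (haux (m - i + b) (a - i) (by omega) (by omega)
          (by have := a.isLt; omega))
      · have h4 := hc.1 hab
        simp only [Fin.mk.injEq] at h4
        exact Fin.ext (by omega)
    · intro n hn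
      simp only
      split_ifs with h1 h2 h2
      · exact hcs.2 (m - i + n) (by omega)
      · -- n < i, n+1 = i : junction
        have h4 := hcs.2 (m-1) (by omega)
        rw [fcg cs (by omega) (by omega) (show m - (i:ℕ) + n = m - 1 by omega)]
        rw [fcg c (by omega) (by omega) (show n + 1 - (i:ℕ) = m - m by omega),
          ← hshift m hmk le_rfl]
        rw [fcg cs (by omega) (by omega) (show (m:ℕ) = m - 1 + 1 by omega)]
        exact h4
      · omega
      · have h4 := hc.2 (n - i) (by omega)
        rw [fcg c (by omega) (by omega) (show n + 1 - (i:ℕ) = n - i + 1 by omega)]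
        exact h4
  · intro i h
    constructor
    · intro n hn
      simp only
      rw [dif_pos (show (0:ℕ) < i + 1 by omega)]
      split_ifs with h1
      · intro hq
        have h3 := hcs.1 hq
        simp only [Fin.mk.injEq] at h3
        omega
      · exact haux (m - (i+1) + 0) (n - i) (by omega) (by omega) (by omega)
    · intro n hn
      simp only
      split_ifs with h1 h2 h2
      · exact fcg cs (by omega) (by omega) (by omega)
      · omega
      · omega
      · exact fcg c (by omega) (by omega) (by omega)

lemma mem_trip [DecidableEq V] {k : ℕ} (c c' c'' : Fin k → V) (x : V)
    (hx : x ∈ List.ofFn c ∨ x ∈ List.ofFn c' ∨ x ∈ List.ofFn c'') :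
    x ∈ tripletOrder c c' c'' := by
  unfold tripletOrder
  simp only [List.mem_append, List.mem_filter, List.mem_reverse, decide_eq_true_eq]
  by_cases h1 : x ∈ List.ofFn c'
  · exact Or.inl (Or.inr h1)
  by_cases h2 : x ∈ List.ofFn c''
  · exact Or.inr ⟨h2, h1⟩
  · rcases hx with h | h | h
    · exact Or.inl (Or.inl ⟨h, h1, h2⟩)
    · exact absurd h h1
    · exact absurd h h2

/-- Lemma 3(iii) of the paper: with `(conf, conf')` an `ℓ`-transition,
`(conf', conf'')` an `r`-transition (`ℓ, r ≤ k-1`), and `f : V(G) → [3k-2]` injective on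
the triplet order `W` and satisfying `f(v_a') = 2k - a` for every `1 ≤ a ≤ k`
(`Fin (3k-2)`-values being shifted by one, this reads `(f v_a' + 1) + a = 2k`): if
`conf* = (w_1, …, w_k)` is a `(G,k)`-configuration with `w_1 = v_1'`, `w_k = v_k'`,
(1) `f(w_a) = 2k - a` for every `1 ≤ a ≤ k`, (2) `w_a = v_{a-ℓ}` for every
`ℓ+1 ≤ a ≤ k`, and (3) `v_a'' = w_{a-r}` for every `r+1 ≤ a ≤ k`, then
`(conf, conf*)` is an `ℓ`-transition and `(conf*, conf'')` is an `r`-transition. -/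
theorem stmt8 [DecidableEq V] (G : SimpleGraph V) (k ℓ r : ℕ)
    (hk : 1 ≤ k) (hℓ1 : 1 ≤ ℓ) (hr1 : 1 ≤ r) (hℓk : ℓ ≤ k - 1) (hrk : r ≤ k - 1)
    (c c' c'' : Fin k → V)
    (h1 : IsTransition G k ℓ c c') (h2 : IsTransition G k r c' c'')
    (f : V → Fin (3 * k - 2))
    (hinj : Set.InjOn f {x | x ∈ tripletOrder c c' c''})
    (hf : ∀ (a : ℕ) (_ha1 : 1 ≤ a) (_ha2 : a ≤ k),
      (f (c' ⟨a - 1, by omega⟩) : ℕ) + 1 + a = 2 * k)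
    (cs : Fin k → V) (hcs : IsConfig G k cs)
    (hhead : cs ⟨0, by omega⟩ = c' ⟨0, by omega⟩)
    (htail : cs ⟨k - 1, by omega⟩ = c' ⟨k - 1, by omega⟩)
    (hp1 : ∀ (a : ℕ) (_ha1 : 1 ≤ a) (_ha2 : a ≤ k),
      (f (cs ⟨a - 1, by omega⟩) : ℕ) + 1 + a = 2 * k)
    (hp2 : ∀ (a : ℕ) (_ha1 : ℓ + 1 ≤ a) (_ha2 : a ≤ k),
      cs ⟨a - 1, by omega⟩ = c ⟨a - ℓ - 1, by omega⟩)
    (hp3 : ∀ (a : ℕ) (_ha1 : r + 1 ≤ a) (_ha2 : a ≤ k),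
      c'' ⟨a - 1, by omega⟩ = cs ⟨a - r - 1, by omega⟩) :
    IsTransition G k ℓ c cs ∧ IsTransition G k r cs c'' := by
  have hc : IsConfig G k c := by
    obtain ⟨s, h0, _, hcfg, _⟩ := h1; exact h0 ▸ hcfg 0
  have hc'' : IsConfig G k c'' := by
    obtain ⟨s, _, hl, hcfg, _⟩ := h2; exact hl ▸ hcfg _
  have hEq : ∀ (b : ℕ) (hb : b < k), cs ⟨b, hb⟩ ∈ tripletOrder c c' c'' →
      cs ⟨b, hb⟩ = c' ⟨b, hb⟩ := by
    intro b hb hmem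
    have e1 := hp1 (b+1) (by omega) (by omega)
    have e2 := hf (b+1) (by omega) (by omega)
    simp only [Nat.add_sub_cancel] at e1 e2
    have hmem' : c' ⟨b, hb⟩ ∈ tripletOrder c c' c'' :=
      mem_trip c c' c'' _ (Or.inr (Or.inl (by
        simp only [List.mem_ofFn]; exact ⟨⟨b, hb⟩, rfl⟩)))
    exact hinj hmem hmem' (Fin.ext (by omega))
  have aux1 : ∀ (j t : ℕ) (hj : j < ℓ) (htk : t < k) (ht : t + ℓ < k + j),
      cs ⟨j, by omega⟩ ≠ c ⟨t, htk⟩ := by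
    intro j t hj htk ht heq
    have hmem : cs ⟨j, by omega⟩ ∈ tripletOrder c c' c'' :=
      mem_trip c c' c'' _ (Or.inl (by
        rw [heq]; simp only [List.mem_ofFn]; exact ⟨⟨t, htk⟩, rfl⟩))
    have h5 := hEq j (by omega) hmem
    exact trans_head_ne h1 (by omega) j t hj htk ht (h5.symm.trans heq)
  have aux2 : ∀ (j t : ℕ) (hj : j < r) (htk : t < k) (ht : t + r < k + j),
      c'' ⟨j, by omega⟩ ≠ cs ⟨t, htk⟩ := by
    intro j t hj htk ht heq
    have hmem : cs ⟨t, htk⟩ ∈ tripletOrder c c' c'' :=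
      mem_trip c c' c'' _ (Or.inr (Or.inr (by
        rw [← heq]; simp only [List.mem_ofFn]; exact ⟨⟨j, by omega⟩, rfl⟩)))
    have h5 := hEq t htk hmem
    exact trans_head_ne h2 (by omega) j t hj htk ht (heq.trans h5)
  constructor
  · refine transition_of (by omega) hc hcs ?_ aux1
    intro a ha hma
    have e := hp2 (a+1) (by omega) (by omega)
    simp only [Nat.add_sub_cancel] at e
    rw [e]
    exact fcg c (by omega) (by omega) (by omega)
  · refine transition_of (by omega) hcs hc'' ?_ aux2
    intro a ha hma
    have e := hp3 (a+1) (by omega) (by omega)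
    simp only [Nat.add_sub_cancel] at e
    rw [e]
    exact fcg cs (by omega) (by omega) (by omega)
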